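/- Bressoud's even-modulus identity: for every positive integer m, ∑_{s₁ ≥ ··· ≥ s_m ≥ 0} q^{s₁²+···+s_m²} / ((q;q)_{s₁−s₂} ··· (q;q)_{s_{m−1}−s_m} (q²;q²)_{s_m}) = (q^{2m+2};q^{2m+2})_∞ / (q;q)_∞ · θ(q^{m+1}; q^{2m+2}), as formal power series in q. -/

import Mathlib

/-!
The proof runs along the Bailey chain. Write `(a)_k` for `(a;q)_k`. The finite form of Gauss's
identity,
`∑_{|j| ≤ n} (-1)^j q^(j²) / ((q)_{n-j} (q)_{n+j}) = (q;q²)_n / (q)_{2n} = 1/(q²;q²)_n`,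
expresses `β_n = 1/(q²;q²)_n` as a Bailey pair relative to `α_j = (-1)^j q^(j²)`. Each
step `β_n ↦ ∑_{k ≤ n} q^(k²) β_k / (q)_{n-k}` of the chain multiplies `α_j` by `q^(j²)`, by
the q-Chu–Vandermonde sum
`∑_{r ≤ M} q^(r(r+A)) / ((q)_{M-r} (q)_r (q)_{r+A}) = 1/((q)_M (q)_{M+A})`.
Both finite identities follow by induction from `1 - q^(u+v) = (1 - q^u) + q^u (1 - q^v)`.

After `m` steps, `∑_{s₁ ≤ n} (multisum term) / (q)_{n-s₁}` equals
`∑_j (-1)^j q^((m+1)j²) / ((q)_{n-j} (q)_{n+j})`. Modulo `q^(d+1)` and with `n = 2d` all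
Pochhammer symbols have stabilised, so `(q)_∞` times the multisum is `∑_j (-1)^j q^((m+1)j²)`.
Gauss's identity in base `q^(m+1)`, truncated the same way, evaluates this as
`(q^(m+1);q^(m+1))_∞ (q^(m+1);q^(2m+2))_∞ = (q^(2m+2);q^(2m+2))_∞ θ(q^(m+1);q^(2m+2))`.
-/

open scoped Classical

open PowerSeries

/-- `(q;q)_k` as a power series over `ℚ`. -/
noncomputable def qp (k : ℕ) : PowerSeries ℚ :=
  ∏ j ∈ Finset.range k, (1 - (PowerSeries.X : PowerSeries ℚ) ^ (j + 1))

/-- `(q²;q²)_k` as a power series over `ℚ`. -/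
noncomputable def qp2 (k : ℕ) : PowerSeries ℚ :=
  ∏ j ∈ Finset.range k, (1 - (PowerSeries.X : PowerSeries ℚ) ^ (2 * (j + 1)))

open Finset Finset.Nat

section CommRing

variable {R : Type*} [CommRing R]

def qPochhammer (q : R) (k : ℕ) : R := ∏ j ∈ range k, (1 - q ^ (j + 1))

/-- `(q;q²)_k`. -/
def qPochhammerOdd (q : R) (k : ℕ) : R := ∏ j ∈ range k, (1 - q ^ (2 * j + 1))

theorem qPochhammer_succ (q : R) (k : ℕ) :
    qPochhammer q (k + 1) = qPochhammer q k * (1 - q ^ (k + 1)) :=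
  prod_range_succ _ _

theorem qPochhammerOdd_succ (q : R) (k : ℕ) :
    qPochhammerOdd q (k + 1) = qPochhammerOdd q k * (1 - q ^ (2 * k + 1)) :=
  prod_range_succ _ _

theorem qPochhammer_two_mul (q : R) (n : ℕ) :
    qPochhammer q (2 * n) = qPochhammer (q ^ 2) n * qPochhammerOdd q n := by
  induction n with
  | zero => simp [qPochhammer, qPochhammerOdd]
  | succ n ih =>
    rw [show 2 * (n + 1) = 2 * n + 1 + 1 by ring, qPochhammer_succ, qPochhammer_succ, ih,
      qPochhammer_succ, qPochhammerOdd_succ, ← pow_mul]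
    ring_nf

end CommRing

theorem sum_antidiagonal_two_mul {R : Type*} [Semiring R] (n : ℕ) (f : ℕ → ℕ → R)
    (hf : ∀ j ≤ n, f (n - j) (n + j) = f (n + j) (n - j)) :
    ∑ p ∈ antidiagonal (2 * n), f p.1 p.2 =
      ∑ j ∈ range (n + 1), (if j = 0 then 1 else 2) * f (n + j) (n - j) := by
  have lower : ∑ k ∈ range n, f k (2 * n - k) =
      ∑ j ∈ range n, f (n + (j + 1)) (n - (j + 1)) := by
    rw [← sum_range_reflect]
    refine sum_congr rfl fun j hj => ?_
    have hjn : j + 1 ≤ n := mem_range.mp hj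
    rw [show n - 1 - j = n - (j + 1) by omega, show 2 * n - (n - (j + 1)) = n + (j + 1) by omega,
      hf _ hjn]
  have upper : ∑ j ∈ range (n + 1), f (n + j) (2 * n - (n + j)) =
      ∑ j ∈ range (n + 1), f (n + j) (n - j) :=
    sum_congr rfl fun j _ => by rw [show 2 * n - (n + j) = n - j by omega]
  rw [sum_antidiagonal_eq_sum_range_succ f, show (2 * n).succ = n + (n + 1) by omega,
    sum_range_add, lower, upper, sum_range_succ', sum_range_succ' (fun j => _ * _)]
  simp only [add_eq_zero, one_ne_zero, and_false, if_false, if_true, two_mul, one_mul,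
    sum_add_distrib]
  abel

theorem add_dist_succ_sq {u v n : ℕ} (h : u + v = 2 * n + 1) :
    u + Nat.dist u (n + 1) ^ 2 = Nat.dist u n ^ 2 + v := by
  rcases le_or_gt u n with hu | hu
  · rw [Nat.dist_eq_sub_of_le (by omega), Nat.dist_eq_sub_of_le hu,
      show n + 1 - u = n - u + 1 by omega]
    ring_nf
    omega
  · rw [Nat.dist_eq_sub_of_le_right (by omega), Nat.dist_eq_sub_of_le_right hu.le,
      show u - n = u - (n + 1) + 1 by omega]
    ring_nf
    omega

section FiniteIdentities

variable {K : Type*} [Field K] {q : K⟦X⟧}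

theorem constantCoeff_one_sub_pow (hq : constantCoeff q = 0) {e : ℕ} (he : e ≠ 0) :
    constantCoeff (1 - q ^ e) = 1 := by
  simp [hq, he]

theorem one_sub_pow_ne_zero (hq : constantCoeff q = 0) {e : ℕ} (he : e ≠ 0) : 1 - q ^ e ≠ 0 :=
  fun h => by simpa [h] using constantCoeff_one_sub_pow hq he

theorem constantCoeff_qPochhammer (hq : constantCoeff q = 0) (k : ℕ) :
    constantCoeff (qPochhammer q k) = 1 := by
  simp [qPochhammer, map_prod, hq]

theorem qPochhammer_mul_inv (hq : constantCoeff q = 0) (k : ℕ) :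
    qPochhammer q k * (qPochhammer q k)⁻¹ = 1 :=
  PowerSeries.mul_inv_cancel _ (by simp [constantCoeff_qPochhammer hq])

theorem one_sub_pow_mul_inv_qPochhammer_succ (hq : constantCoeff q = 0) (k : ℕ) :
    (1 - q ^ (k + 1)) * (qPochhammer q (k + 1))⁻¹ = (qPochhammer q k)⁻¹ := by
  rw [qPochhammer_succ, PowerSeries.mul_inv_rev, ← mul_assoc, PowerSeries.mul_inv_cancel _
    (by simp [constantCoeff_one_sub_pow hq]), one_mul]

theorem inv_qPochhammer_sq (hq : constantCoeff q = 0) (n : ℕ) :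
    (qPochhammer (q ^ 2) n)⁻¹ = qPochhammerOdd q n * (qPochhammer q (2 * n))⁻¹ := by
  rw [qPochhammer_two_mul, PowerSeries.mul_inv_rev, ← mul_assoc,
    PowerSeries.mul_inv_cancel _ (by simp [qPochhammerOdd, map_prod, hq]), one_mul]

theorem sum_antidiagonal_succ_one_sub_pow_fst (hq : constantCoeff q = 0) (N : ℕ)
    (c : ℕ → ℕ → K⟦X⟧) :
    ∑ p ∈ antidiagonal (N + 1),
        c p.1 p.2 * (1 - q ^ p.1) * (qPochhammer q p.1)⁻¹ * (qPochhammer q p.2)⁻¹ =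
      ∑ p ∈ antidiagonal N,
        c (p.1 + 1) p.2 * (qPochhammer q p.1)⁻¹ * (qPochhammer q p.2)⁻¹ := by
  rw [sum_antidiagonal_succ]
  simp only [pow_zero, sub_self, mul_zero, zero_mul, zero_add]
  refine sum_congr rfl fun p _ => ?_
  rw [← one_sub_pow_mul_inv_qPochhammer_succ hq p.1]
  ring

theorem sum_antidiagonal_succ_one_sub_pow_snd (hq : constantCoeff q = 0) (N : ℕ)
    (c : ℕ → ℕ → K⟦X⟧) :
    ∑ p ∈ antidiagonal (N + 1),
        c p.1 p.2 * (1 - q ^ p.2) * (qPochhammer q p.1)⁻¹ * (qPochhammer q p.2)⁻¹ =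
      ∑ p ∈ antidiagonal N,
        c p.1 (p.2 + 1) * (qPochhammer q p.1)⁻¹ * (qPochhammer q p.2)⁻¹ := by
  rw [sum_antidiagonal_succ']
  simp only [pow_zero, sub_self, mul_zero, zero_mul, zero_add]
  refine sum_congr rfl fun p _ => ?_
  rw [← one_sub_pow_mul_inv_qPochhammer_succ hq p.2]
  ring

theorem one_sub_pow_mul_sum_antidiagonal (hq : constantCoeff q = 0) (N : ℕ)
    (c : ℕ → ℕ → K⟦X⟧) :
    (1 - q ^ (N + 1)) * ∑ p ∈ antidiagonal (N + 1),
        c p.1 p.2 * (qPochhammer q p.1)⁻¹ * (qPochhammer q p.2)⁻¹ =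
      ∑ p ∈ antidiagonal N, (c (p.1 + 1) p.2 + q ^ p.1 * c p.1 (p.2 + 1)) *
        (qPochhammer q p.1)⁻¹ * (qPochhammer q p.2)⁻¹ := by
  have split : ∀ p ∈ antidiagonal (N + 1),
      (1 - q ^ (N + 1)) * (c p.1 p.2 * (qPochhammer q p.1)⁻¹ * (qPochhammer q p.2)⁻¹) =
        c p.1 p.2 * (1 - q ^ p.1) * (qPochhammer q p.1)⁻¹ * (qPochhammer q p.2)⁻¹ +
          q ^ p.1 * c p.1 p.2 * (1 - q ^ p.2) * (qPochhammer q p.1)⁻¹ *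
            (qPochhammer q p.2)⁻¹ := by
    intro p hp
    rw [← mem_antidiagonal.mp hp, pow_add]
    ring
  rw [mul_sum, sum_congr rfl split, sum_add_distrib, sum_antidiagonal_succ_one_sub_pow_fst hq,
    sum_antidiagonal_succ_one_sub_pow_snd hq N (fun u v => q ^ u * c u v), ← sum_add_distrib]
  exact sum_congr rfl fun p _ => by ring

noncomputable def finiteGaussSum (q : K⟦X⟧) (n : ℕ) : K⟦X⟧ :=
  ∑ p ∈ antidiagonal (2 * n),
    (-1) ^ (p.1 + n) * q ^ (Nat.dist p.1 n ^ 2) * (qPochhammer q p.1)⁻¹ *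
      (qPochhammer q p.2)⁻¹

theorem one_sub_pow_mul_finiteGaussSum_succ (hq : constantCoeff q = 0) (n : ℕ) :
    (1 - q ^ (2 * n + 2)) * finiteGaussSum q (n + 1) = finiteGaussSum q n := by
  have step : ∀ p ∈ antidiagonal (2 * n + 1),
      ((-1) ^ (p.1 + 1 + (n + 1)) * q ^ (Nat.dist (p.1 + 1) (n + 1) ^ 2) +
          q ^ p.1 * ((-1) ^ (p.1 + (n + 1)) * q ^ (Nat.dist p.1 (n + 1) ^ 2))) *
        (qPochhammer q p.1)⁻¹ * (qPochhammer q p.2)⁻¹ =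
      (-1) ^ (p.1 + n) * q ^ (Nat.dist p.1 n ^ 2) * (1 - q ^ p.2) *
        (qPochhammer q p.1)⁻¹ * (qPochhammer q p.2)⁻¹ := by
    intro p hp
    have e : q ^ p.1 * q ^ (Nat.dist p.1 (n + 1) ^ 2) = q ^ (Nat.dist p.1 n ^ 2) * q ^ p.2 := by
      rw [← pow_add, ← pow_add, add_dist_succ_sq (mem_antidiagonal.mp hp)]
    rw [Nat.dist_succ_succ]
    linear_combination
      ((-1) ^ (p.1 + (n + 1)) * (qPochhammer q p.1)⁻¹ * (qPochhammer q p.2)⁻¹) * e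
  rw [finiteGaussSum, finiteGaussSum, show 2 * (n + 1) = 2 * n + 1 + 1 by ring,
    show 2 * n + 2 = 2 * n + 1 + 1 from rfl, one_sub_pow_mul_sum_antidiagonal hq _
      (fun u _ => (-1) ^ (u + (n + 1)) * q ^ (Nat.dist u (n + 1) ^ 2)), sum_congr rfl step,
    sum_antidiagonal_succ_one_sub_pow_snd hq (2 * n)
      (fun u _ => (-1) ^ (u + n) * q ^ (Nat.dist u n ^ 2))]

theorem finiteGaussSum_eq (hq : constantCoeff q = 0) (n : ℕ) :
    finiteGaussSum q n = qPochhammerOdd q n * (qPochhammer q (2 * n))⁻¹ := by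
  induction n with
  | zero => simp [finiteGaussSum, qPochhammerOdd, qPochhammer]
  | succ n ih =>
    apply mul_left_cancel₀ (one_sub_pow_ne_zero hq (e := 2 * n + 2) (by omega))
    rw [one_sub_pow_mul_finiteGaussSum_succ hq, ih, qPochhammerOdd_succ,
      show 2 * (n + 1) = 2 * n + 1 + 1 by ring, ← one_sub_pow_mul_inv_qPochhammer_succ hq (2 * n),
      ← one_sub_pow_mul_inv_qPochhammer_succ hq (2 * n + 1)]
    ring

/-- `∑_{|j| ≤ n} (-1)^j Y^(j²) / ((q;q)_{n+j} (q;q)_{n-j})`, with the terms `±j` merged. -/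
noncomputable def foldedSum (q Y : K⟦X⟧) (n : ℕ) : K⟦X⟧ :=
  ∑ j ∈ range (n + 1), (if j = 0 then 1 else 2) *
    ((-1) ^ j * Y ^ (j ^ 2) * (qPochhammer q (n + j))⁻¹ * (qPochhammer q (n - j))⁻¹)

theorem foldedSum_self (hq : constantCoeff q = 0) (n : ℕ) :
    foldedSum q q n = qPochhammerOdd q n * (qPochhammer q (2 * n))⁻¹ := by
  have dist_sub : ∀ j ≤ n, Nat.dist (n - j) n = j := fun j hj => by
    rw [Nat.dist_eq_sub_of_le (Nat.sub_le n j)]; omega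
  have dist_add : ∀ j, Nat.dist (n + j) n = j := fun j => by
    rw [Nat.dist_eq_sub_of_le_right (Nat.le_add_right n j)]; omega
  have sign : ∀ j, (-1 : K⟦X⟧) ^ (n + j + n) = (-1) ^ j := fun j => by
    rw [show n + j + n = j + 2 * n by ring, pow_add, pow_mul, neg_one_sq, one_pow, mul_one]
  rw [← finiteGaussSum_eq hq, finiteGaussSum, sum_antidiagonal_two_mul n (fun u v =>
    (-1) ^ (u + n) * q ^ (Nat.dist u n ^ 2) * (qPochhammer q u)⁻¹ * (qPochhammer q v)⁻¹)]
  · exact sum_congr rfl fun j _ => by rw [sign, dist_add]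
  · intro j hj
    rw [dist_sub j hj, dist_add, show n + j + n = n - j + n + 2 * j by omega,
      pow_add _ (n - j + n), pow_mul, neg_one_sq, one_pow]
    ring

theorem sum_antidiagonal_bailey (hq : constantCoeff q = 0) (M A : ℕ) :
    ∑ p ∈ antidiagonal M, q ^ (p.2 * (p.2 + A)) * (qPochhammer q (p.2 + A))⁻¹ *
        (qPochhammer q p.1)⁻¹ * (qPochhammer q p.2)⁻¹ =
      (qPochhammer q M)⁻¹ * (qPochhammer q (M + A))⁻¹ := by
  induction M generalizing A with
  | zero => simp [qPochhammer]
  | succ M ih =>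
    apply mul_left_cancel₀ (one_sub_pow_ne_zero hq (e := M + 1) (by omega))
    have step : ∀ p ∈ antidiagonal M,
        (q ^ (p.2 * (p.2 + A)) * (qPochhammer q (p.2 + A))⁻¹ +
            q ^ p.1 * (q ^ ((p.2 + 1) * (p.2 + 1 + A)) * (qPochhammer q (p.2 + 1 + A))⁻¹)) *
          (qPochhammer q p.1)⁻¹ * (qPochhammer q p.2)⁻¹ =
        q ^ (p.2 * (p.2 + A)) * (qPochhammer q (p.2 + A))⁻¹ *
            (qPochhammer q p.1)⁻¹ * (qPochhammer q p.2)⁻¹ +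
          q ^ (M + A + 1) * (q ^ (p.2 * (p.2 + (A + 1))) * (qPochhammer q (p.2 + (A + 1)))⁻¹ *
            (qPochhammer q p.1)⁻¹ * (qPochhammer q p.2)⁻¹) := by
      intro p hp
      have e : q ^ p.1 * q ^ ((p.2 + 1) * (p.2 + 1 + A)) =
          q ^ (M + A + 1) * q ^ (p.2 * (p.2 + (A + 1))) := by
        rw [← pow_add, ← pow_add, ← mem_antidiagonal.mp hp]
        ring_nf
      rw [show p.2 + 1 + A = p.2 + (A + 1) by ring] at e ⊢
      linear_combination ((qPochhammer q (p.2 + (A + 1)))⁻¹ * (qPochhammer q p.1)⁻¹ *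
        (qPochhammer q p.2)⁻¹) * e
    rw [one_sub_pow_mul_sum_antidiagonal hq M
        (fun _ r => q ^ (r * (r + A)) * (qPochhammer q (r + A))⁻¹),
      sum_congr rfl step, sum_add_distrib, ← mul_sum, ih, ih, ← add_assoc,
      show M + 1 + A = M + A + 1 by ring, ← one_sub_pow_mul_inv_qPochhammer_succ hq (M + A),
      ← one_sub_pow_mul_inv_qPochhammer_succ hq M]
    ring

theorem sum_Ico_bailey (hq : constantCoeff q = 0) {j n : ℕ} (hj : j ≤ n) :
    ∑ k ∈ Ico j (n + 1), q ^ (k ^ 2) * (qPochhammer q (n - k))⁻¹ *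
        ((qPochhammer q (k + j))⁻¹ * (qPochhammer q (k - j))⁻¹) =
      q ^ (j ^ 2) * ((qPochhammer q (n + j))⁻¹ * (qPochhammer q (n - j))⁻¹) := by
  have reindex : ∀ r ∈ range (n - j + 1),
      q ^ ((j + r) ^ 2) * (qPochhammer q (n - (j + r)))⁻¹ *
          ((qPochhammer q (j + r + j))⁻¹ * (qPochhammer q (j + r - j))⁻¹) =
        q ^ (j ^ 2) * (q ^ (r * (r + 2 * j)) * (qPochhammer q (r + 2 * j))⁻¹ *
          (qPochhammer q (n - j - r))⁻¹ * (qPochhammer q r)⁻¹) := fun r _ => by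
    rw [show (j + r) ^ 2 = j ^ 2 + r * (r + 2 * j) by ring, show j + r + j = r + 2 * j by ring,
      show n - (j + r) = n - j - r by omega, Nat.add_sub_cancel_left, pow_add]
    ring
  rw [sum_Ico_eq_sum_range, show n + 1 - j = n - j + 1 by omega, sum_congr rfl reindex,
    ← mul_sum, show n + j = n - j + 2 * j by omega, mul_comm (qPochhammer q (n - j + 2 * j))⁻¹,
    ← sum_antidiagonal_bailey hq (n - j) (2 * j), ← Nat.sum_antidiagonal_swap]
  simp only [Prod.fst_swap, Prod.snd_swap]
  rw [sum_antidiagonal_eq_sum_range_succ (fun u v => q ^ (u * (u + 2 * j)) *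
    (qPochhammer q (u + 2 * j))⁻¹ * (qPochhammer q v)⁻¹ * (qPochhammer q u)⁻¹)]

/-- `β_n = 1/(q²;q²)_n`, pushed `t` times along the Bailey chain. -/
noncomputable def baileyChain (q : K⟦X⟧) : ℕ → ℕ → K⟦X⟧
  | 0, n => (qPochhammer (q ^ 2) n)⁻¹
  | t + 1, n =>
    ∑ k ∈ range (n + 1), (qPochhammer q (n - k))⁻¹ * (q ^ (k ^ 2) * baileyChain q t k)

theorem baileyChain_eq_foldedSum (hq : constantCoeff q = 0) (t n : ℕ) :
    baileyChain q t n = foldedSum q (q ^ (t + 1)) n := by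
  induction t generalizing n with
  | zero => rw [baileyChain, pow_one, foldedSum_self hq, inv_qPochhammer_sq hq]
  | succ t ih =>
    simp only [baileyChain, ih, foldedSum, mul_sum]
    rw [sum_comm' (t' := range (n + 1)) (s' := fun j => Ico j (n + 1)) (by intros; simp; omega)]
    refine sum_congr rfl fun j hj => ?_
    calc _ = (if j = 0 then 1 else 2) * ((-1) ^ j * (q ^ (t + 1)) ^ j ^ 2 *
          ∑ k ∈ Ico j (n + 1), q ^ (k ^ 2) * (qPochhammer q (n - k))⁻¹ *
            ((qPochhammer q (k + j))⁻¹ * (qPochhammer q (k - j))⁻¹)) := by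
          rw [mul_sum, mul_sum]
          exact sum_congr rfl fun _ _ => by ring
      _ = _ := by
          rw [sum_Ico_bailey hq (mem_range_succ_iff.mp hj), pow_succ q (t + 1), mul_pow]
          ring

end FiniteIdentities

noncomputable abbrev modXPow (R : Type*) [CommRing R] (d : ℕ) :
    R⟦X⟧ →+* R⟦X⟧ ⧸ Ideal.span {(X : R⟦X⟧) ^ (d + 1)} :=
  Ideal.Quotient.mk _

section Truncation

variable {R : Type*} [CommRing R] {d : ℕ}

theorem coeff_eq_of_modXPow_eq {A B : R⟦X⟧} (h : modXPow R d A = modXPow R d B) :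
    coeff d A = coeff d B := by
  rw [Ideal.Quotient.eq, Ideal.mem_span_singleton] at h
  rw [← sub_eq_zero, ← map_sub]
  exact X_pow_dvd_iff.mp h d d.lt_succ_self

theorem modXPow_pow_eq_zero {q : R⟦X⟧} (hq : constantCoeff q = 0) {e : ℕ} (he : d < e) :
    modXPow R d (q ^ e) = 0 := by
  rw [Ideal.Quotient.eq_zero_iff_mem, Ideal.mem_span_singleton]
  exact (pow_dvd_pow X he).trans (pow_dvd_pow_of_dvd (X_dvd_iff.mpr hq) e)

theorem modXPow_sum_range {f : ℕ → R⟦X⟧} {N : ℕ} (hN : d ≤ N)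
    (hf : ∀ k, d < k → modXPow R d (f k) = 0) :
    modXPow R d (∑ k ∈ range (N + 1), f k) = modXPow R d (∑ k ∈ range (d + 1), f k) := by
  obtain ⟨c, rfl⟩ := Nat.exists_eq_add_of_le hN
  rw [show d + c + 1 = d + 1 + c by ring, sum_range_add, map_add, add_eq_left, map_sum]
  exact sum_eq_zero fun k _ => hf _ (by omega)

theorem modXPow_prod_range_one_sub_pow {q : R⟦X⟧} (hq : constantCoeff q = 0) (e : ℕ → ℕ)
    (he : ∀ j, j < e j) {a : ℕ} (ha : d ≤ a) :
    modXPow R d (∏ j ∈ range a, (1 - q ^ e j)) =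
      modXPow R d (∏ j ∈ range d, (1 - q ^ e j)) := by
  obtain ⟨c, rfl⟩ := Nat.exists_eq_add_of_le ha
  have tail : ∏ j ∈ range c, modXPow R d (1 - q ^ e (d + j)) = 1 := prod_eq_one fun j _ => by
    rw [map_sub, map_one, modXPow_pow_eq_zero hq ((Nat.le_add_right d j).trans_lt (he _)),
      sub_zero]
  rw [prod_range_add, map_mul, map_prod (modXPow R d) (fun j => 1 - q ^ e (d + j)), tail,
    mul_one]

theorem modXPow_qPochhammer {q : R⟦X⟧} (hq : constantCoeff q = 0) {a : ℕ} (ha : d ≤ a) :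
    modXPow R d (qPochhammer q a) = modXPow R d (qPochhammer q d) :=
  modXPow_prod_range_one_sub_pow hq _ (fun j => j.lt_succ_self) ha

theorem modXPow_qPochhammerOdd {q : R⟦X⟧} (hq : constantCoeff q = 0) {a : ℕ} (ha : d ≤ a) :
    modXPow R d (qPochhammerOdd q a) = modXPow R d (qPochhammerOdd q d) :=
  modXPow_prod_range_one_sub_pow hq _ (fun j => by omega) ha

end Truncation

section Stabilisation

variable {K : Type*} [Field K] {d : ℕ} {q Y : K⟦X⟧}

theorem modXPow_inv {A B : K⟦X⟧} (hA : constantCoeff A ≠ 0) (hB : constantCoeff B ≠ 0)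
    (h : modXPow K d A = modXPow K d B) : modXPow K d A⁻¹ = modXPow K d B⁻¹ := by
  have hA' := congrArg (modXPow K d) (PowerSeries.mul_inv_cancel A hA)
  have hB' := congrArg (modXPow K d) (PowerSeries.mul_inv_cancel B hB)
  rw [map_mul, map_one] at hA' hB'
  linear_combination modXPow K d B⁻¹ * hA' - modXPow K d A⁻¹ * hB' -
    modXPow K d A⁻¹ * modXPow K d B⁻¹ * h

theorem modXPow_qPochhammer_mul_inv (hq : constantCoeff q = 0) (k : ℕ) :
    modXPow K d (qPochhammer q k) * modXPow K d (qPochhammer q k)⁻¹ = 1 := by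
  rw [← map_mul, qPochhammer_mul_inv hq, map_one]

theorem modXPow_inv_qPochhammer (hq : constantCoeff q = 0) {a : ℕ} (ha : d ≤ a) :
    modXPow K d (qPochhammer q a)⁻¹ = modXPow K d (qPochhammer q d)⁻¹ :=
  modXPow_inv (by simp [constantCoeff_qPochhammer hq]) (by simp [constantCoeff_qPochhammer hq])
    (modXPow_qPochhammer hq ha)

theorem modXPow_baileyChain_succ (hq : constantCoeff q = 0) (t : ℕ) {N : ℕ} (hN : 2 * d ≤ N) :
    modXPow K d (baileyChain q (t + 1) N) = modXPow K d
      ((qPochhammer q d)⁻¹ * ∑ k ∈ range (d + 1), q ^ (k ^ 2) * baileyChain q t k) := by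
  have tail : ∀ k, d < k →
      modXPow K d ((qPochhammer q (N - k))⁻¹ * (q ^ (k ^ 2) * baileyChain q t k)) = 0 :=
    fun k hk => by
      rw [map_mul, map_mul, modXPow_pow_eq_zero hq (hk.trans_le (Nat.le_self_pow two_ne_zero k)),
        zero_mul, mul_zero]
  rw [baileyChain, modXPow_sum_range (by omega) tail, mul_sum, map_sum, map_sum]
  refine sum_congr rfl fun k hk => ?_
  simp only [map_mul]
  rw [modXPow_inv_qPochhammer hq (by simp at hk; omega)]

/-- `∑_{|j| ≤ N} (-1)^j Y^(j²)`, with the terms `±j` merged. -/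
noncomputable def thetaSum (Y : K⟦X⟧) (N : ℕ) : K⟦X⟧ :=
  ∑ j ∈ range (N + 1), (if j = 0 then 1 else 2) * ((-1) ^ j * Y ^ (j ^ 2))

theorem modXPow_foldedSum (hq : constantCoeff q = 0) (hY : constantCoeff Y = 0) {N : ℕ}
    (hN : 2 * d ≤ N) :
    modXPow K d (foldedSum q Y N) = modXPow K d ((qPochhammer q d)⁻¹ ^ 2 * thetaSum Y N) := by
  rw [foldedSum, thetaSum, mul_sum, map_sum, map_sum]
  refine sum_congr rfl fun j _ => ?_
  by_cases hj : j ≤ d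
  · simp only [map_mul, map_pow]
    rw [modXPow_inv_qPochhammer hq (by omega : d ≤ N + j),
      modXPow_inv_qPochhammer hq (by omega : d ≤ N - j)]
    ring
  · have hY0 : modXPow K d (Y ^ (j ^ 2)) = 0 :=
      modXPow_pow_eq_zero hY ((not_le.mp hj).trans_le (Nat.le_self_pow two_ne_zero j))
    simp only [map_mul, map_pow, hY0, mul_zero, zero_mul]

theorem modXPow_thetaSum (hY : constantCoeff Y = 0) :
    modXPow K d (thetaSum Y (2 * d)) =
      modXPow K d (qPochhammer Y d * qPochhammerOdd Y (2 * d)) := by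
  have h := modXPow_foldedSum (d := d) hY hY le_rfl
  rw [foldedSum_self hY, map_mul, map_mul, modXPow_inv_qPochhammer hY (by omega), map_pow] at h
  have hinv := modXPow_qPochhammer_mul_inv (d := d) hY d
  set a := modXPow K d (qPochhammer Y d)
  set b := modXPow K d (qPochhammer Y d)⁻¹
  set θ := modXPow K d (thetaSum Y (2 * d))
  set o := modXPow K d (qPochhammerOdd Y (2 * d))
  rw [map_mul]
  linear_combination a ^ 2 * h.symm - (θ * (1 + a * b) - a * o) * hinv

theorem modXPow_sum_baileyChain (hq : constantCoeff q = 0) (t : ℕ) :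
    modXPow K d (∑ k ∈ range (d + 1), q ^ (k ^ 2) * baileyChain q t k) =
      modXPow K d ((qPochhammer q d)⁻¹ * qPochhammer (q ^ (t + 2)) d *
        qPochhammerOdd (q ^ (t + 2)) (2 * d)) := by
  have hY : constantCoeff (q ^ (t + 2)) = 0 := by simp [hq]
  -- `baileyChain q (t + 1) (2 * d)`, reduced in two ways
  have chain := modXPow_baileyChain_succ hq t (le_refl (2 * d))
  rw [baileyChain_eq_foldedSum hq, modXPow_foldedSum hq hY le_rfl, map_mul, map_mul, map_pow,
    modXPow_thetaSum hY, map_mul] at chain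
  have hinv := modXPow_qPochhammer_mul_inv (d := d) hq d
  simp only [map_mul]
  set a := modXPow K d (qPochhammer q d)
  set b := modXPow K d (qPochhammer q d)⁻¹
  set L := modXPow K d (∑ k ∈ range (d + 1), q ^ (k ^ 2) * baileyChain q t k)
  set P := modXPow K d (qPochhammer (q ^ (t + 2)) d)
  set o := modXPow K d (qPochhammerOdd (q ^ (t + 2)) (2 * d))
  linear_combination a * chain.symm - (L - b * P * o) * hinv

theorem modXPow_qPochhammer_mul_qPochhammerOdd_sq (hq : constantCoeff q = 0)
    (hY : constantCoeff Y = 0) :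
    modXPow K d (qPochhammer (Y ^ 2) (d + 1) * (qPochhammer q (d + 1))⁻¹ *
        qPochhammerOdd Y (d + 1) ^ 2) =
      modXPow K d ((qPochhammer q d)⁻¹ * qPochhammer Y d * qPochhammerOdd Y (2 * d)) := by
  rw [show qPochhammer (Y ^ 2) (d + 1) * (qPochhammer q (d + 1))⁻¹ *
      qPochhammerOdd Y (d + 1) ^ 2 =
        (qPochhammer q (d + 1))⁻¹ * qPochhammer Y (2 * (d + 1)) * qPochhammerOdd Y (d + 1) by
    rw [qPochhammer_two_mul]; ring]
  simp only [map_mul]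
  rw [modXPow_inv_qPochhammer hq (Nat.le_succ d), modXPow_qPochhammer hY (by omega),
    modXPow_qPochhammerOdd hY (Nat.le_succ d), modXPow_qPochhammerOdd hY (by omega : d ≤ 2 * d)]

end Stabilisation
section Tuples

variable {K : Type*} [Field K]

noncomputable def tupleTerm (q : K⟦X⟧) (t : ℕ) (f : ℕ → ℕ) : K⟦X⟧ :=
  q ^ (∑ i ∈ range (t + 1), f i ^ 2) *
    ((∏ i ∈ range t, qPochhammer q (f i - f (i + 1))) * qPochhammer (q ^ 2) (f t))⁻¹

theorem tupleTerm_zero (q : K⟦X⟧) (f : ℕ → ℕ) :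
    tupleTerm q 0 f = q ^ (f 0 ^ 2) * (qPochhammer (q ^ 2) (f 0))⁻¹ := by
  simp [tupleTerm]

theorem tupleTerm_succ (q : K⟦X⟧) (t : ℕ) (f : ℕ → ℕ) :
    tupleTerm q (t + 1) f =
      q ^ (f 0 ^ 2) * (qPochhammer q (f 0 - f 1))⁻¹ * tupleTerm q t (fun i => f (i + 1)) := by
  simp only [tupleTerm, sum_range_succ' _ (t + 1), prod_range_succ' _ t, pow_add,
    PowerSeries.mul_inv_rev]
  ring

def natTuple {m d : ℕ} (s : Fin m → Fin (d + 1)) (k : ℕ) : ℕ :=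
  if h : k < m then s ⟨k, h⟩ else 0

theorem natTuple_zero {t d : ℕ} (s : Fin (t + 1) → Fin (d + 1)) : natTuple s 0 = s 0 := by
  simp [natTuple]

theorem natTuple_cons_succ {t d : ℕ} (a : Fin (d + 1)) (u : Fin (t + 1) → Fin (d + 1)) :
    (fun k => natTuple (Fin.cons a u : Fin (t + 2) → Fin (d + 1)) (k + 1)) = natTuple u := by
  funext k
  by_cases hk : k < t + 1
  · simp only [natTuple, dif_pos hk, dif_pos (show k + 1 < t + 2 by omega)]
    rfl
  · simp only [natTuple, dif_neg hk, dif_neg (show ¬k + 1 < t + 2 by omega)]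

theorem sum_fin_le_eq_sum_range {M : Type*} [AddCommMonoid M] {n d : ℕ} (hn : n ≤ d)
    (F : ℕ → M) :
    ∑ a ∈ univ.filter (fun a : Fin (d + 1) => (a : ℕ) ≤ n), F a =
      ∑ k ∈ range (n + 1), F k := by
  rw [sum_filter, Fin.sum_univ_eq_sum_range (fun k => if k ≤ n then F k else 0), ← sum_filter]
  congr 1
  ext k
  simp only [mem_filter, mem_range]
  omega

/-- The weight `w` lets the induction absorb the factor `1/(q;q)_{s₀-s₁}` of the entry in
front. -/
theorem sum_antitone_tupleTerm (q : K⟦X⟧) {d : ℕ} (t : ℕ) (w : ℕ → K⟦X⟧) {n : ℕ}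
    (hn : n ≤ d) :
    ∑ s ∈ univ.filter (fun s : Fin (t + 1) → Fin (d + 1) => Antitone s ∧ (s 0 : ℕ) ≤ n),
        w (s 0) * tupleTerm q t (natTuple s) =
      ∑ k ∈ range (n + 1), w k * (q ^ (k ^ 2) * baileyChain q t k) := by
  rw [← sum_fin_le_eq_sum_range hn, sum_filter, sum_filter]
  induction t generalizing w n with
  | zero =>
    rw [← (Equiv.funUnique (Fin 1) (Fin (d + 1))).symm.sum_comp]
    refine sum_congr rfl fun a _ => ?_
    simp [Subsingleton.antitone, natTuple_zero, tupleTerm_zero, baileyChain]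
  | succ t ih =>
    rw [← (Fin.consEquiv fun _ => Fin (d + 1)).sum_comp, Fintype.sum_prod_type]
    refine sum_congr rfl fun a _ => ?_
    by_cases ha : (a : ℕ) ≤ n
    · rw [if_pos ha, baileyChain, ← sum_fin_le_eq_sum_range a.is_le, sum_filter,
        ← ih (fun k => (qPochhammer q (a - k))⁻¹) a.is_le, mul_sum, mul_sum]
      refine sum_congr rfl fun u _ => ?_
      have hcons : Antitone (Fin.cons a u : Fin (t + 2) → Fin (d + 1)) ↔
          u 0 ≤ a ∧ Antitone u :=
        antitone_vecCons
      rw [show (Fin.consEquiv fun _ => Fin (d + 1)) (a, u) = Fin.cons a u from rfl,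
        tupleTerm_succ, natTuple_cons_succ, natTuple_zero, Fin.cons_zero,
        congrFun (natTuple_cons_succ a u) 0, natTuple_zero]
      by_cases hu : Antitone u ∧ (u 0 : ℕ) ≤ a
      · rw [if_pos ⟨hcons.mpr ⟨hu.2, hu.1⟩, ha⟩, if_pos hu]
        ring
      · rw [if_neg fun h => hu ⟨(hcons.mp h.1).2, (hcons.mp h.1).1⟩, if_neg hu, mul_zero,
          mul_zero]
    · rw [if_neg ha]
      exact sum_eq_zero fun u _ => if_neg fun h => ha h.2

end Tuples

theorem qp2_eq_qPochhammer (k : ℕ) : qp2 k = qPochhammer (X ^ 2) k :=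
  prod_congr rfl fun j _ => by rw [← pow_mul]

/-- Here `θ(q^{m+1};q^{2m+2}) = ∏_{j≥0}(1-q^{(2m+2)j+m+1})²`. Tuples with some `s_i > d` and
product factors of degree `> d` contribute nothing to the coefficient of `q^d`, so both
sides are truncated accordingly. -/
theorem bressoud (m : ℕ) (hm : 1 ≤ m) (d : ℕ) :
    PowerSeries.coeff d
        (∑ s ∈ Finset.univ.filter
            (fun s : Fin m → Fin (d + 1) => ∀ i j : Fin m, i ≤ j → (s j : ℕ) ≤ (s i : ℕ)),
          (PowerSeries.X : PowerSeries ℚ) ^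
              (∑ i ∈ Finset.range m, ((fun k => if h : k < m then (s ⟨k, h⟩ : ℕ) else 0) i) ^ 2) *
            ((∏ i ∈ Finset.range (m - 1),
                qp ((fun k => if h : k < m then (s ⟨k, h⟩ : ℕ) else 0) i
                    - (fun k => if h : k < m then (s ⟨k, h⟩ : ℕ) else 0) (i + 1))) *
              qp2 ((fun k => if h : k < m then (s ⟨k, h⟩ : ℕ) else 0) (m - 1)))⁻¹)
      = PowerSeries.coeff d
        ((∏ j ∈ Finset.range (d + 1), (1 - (PowerSeries.X : PowerSeries ℚ) ^ ((2 * m + 2) * (j + 1)))) *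
          (∏ j ∈ Finset.range (d + 1), (1 - (PowerSeries.X : PowerSeries ℚ) ^ (j + 1)))⁻¹ *
          ∏ j ∈ Finset.range (d + 1),
            ((1 - (PowerSeries.X : PowerSeries ℚ) ^ ((2 * m + 2) * j + (m + 1))) *
              (1 - (PowerSeries.X : PowerSeries ℚ) ^ ((2 * m + 2) * j + (m + 1))))) := by
  obtain ⟨t, rfl⟩ : ∃ t, m = t + 1 := ⟨m - 1, by omega⟩
  have hX : constantCoeff (X : ℚ⟦X⟧) = 0 := constantCoeff_X
  have hfilter : univ.filter (fun s : Fin (t + 1) → Fin (d + 1) =>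
      ∀ i j : Fin (t + 1), i ≤ j → (s j : ℕ) ≤ (s i : ℕ)) =
        univ.filter (fun s : Fin (t + 1) → Fin (d + 1) => Antitone s ∧ (s 0 : ℕ) ≤ d) :=
    filter_congr fun s _ => ⟨fun h => ⟨fun i j hij => h i j hij, (s 0).is_le⟩,
      fun h i j hij => h.1 hij⟩
  have tuples := sum_antitone_tupleTerm (X : ℚ⟦X⟧) t (fun _ => 1) (le_refl d)
  simp only [one_mul] at tuples
  calc _ = coeff d (∑ k ∈ range (d + 1), X ^ (k ^ 2) * baileyChain X t k) := by
        rw [hfilter, ← tuples]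
        simp only [qp2_eq_qPochhammer]
        rfl
    _ = coeff d (qPochhammer ((X ^ (t + 2)) ^ 2) (d + 1) * (qPochhammer X (d + 1))⁻¹ *
          qPochhammerOdd (X ^ (t + 2)) (d + 1) ^ 2) :=
        coeff_eq_of_modXPow_eq (by
          rw [modXPow_sum_baileyChain hX,
            modXPow_qPochhammer_mul_qPochhammerOdd_sq hX (by simp)])
    _ = _ := by
        simp only [qPochhammer, qPochhammerOdd, sq, ← prod_mul_distrib, ← pow_mul]
        ring_nf
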